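/- Let g(x) = min(x, 1-x) and ψ₂ = 1/12. Then ψ₆ := ∫₀¹ ( (∫₀ᵘ g(s) ds) · g(u) - ∫₀ᵘ (g(s) - ψ₂) ds )² du = 143/24192. -/

import Mathlib

/-- The weight function `g(x) = x ∧ (1 - x)`. -/
noncomputable def g : ℝ → ℝ := fun x => min x (1 - x)

lemma g_cont : Continuous g := continuous_id.min (continuous_const.sub continuous_id)

lemma g_intble (a b : ℝ) : IntervalIntegrable g MeasureTheory.volume a b :=
  g_cont.intervalIntegrable a b

lemma g_lo {x : ℝ} (h : x ≤ 1/2) : g x = x := by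
  unfold g; rw [min_eq_left]; linarith

lemma g_hi {x : ℝ} (h : 1/2 ≤ x) : g x = 1 - x := by
  unfold g; rw [min_eq_right]; linarith

lemma F_lo {u : ℝ} (h0 : 0 ≤ u) (h1 : u ≤ 1/2) : (∫ s in (0:ℝ)..u, g s) = u^2/2 := by
  have : (∫ s in (0:ℝ)..u, g s) = u^2/2 - 0^2/2 := by
    apply intervalIntegral.integral_eq_sub_of_hasDerivAt (f := fun x => x^2/2)
    · intro x hx
      rw [Set.uIcc_of_le h0] at hx
      rw [g_lo (by linarith [hx.2])]
      have : HasDerivAt (fun x : ℝ => x^2/2) (2 * x ^ 1 / 2) x :=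
        ((hasDerivAt_pow 2 x).div_const 2)
      simpa using this
    · exact g_intble 0 u
  simpa using this

lemma F_hi {u : ℝ} (h0 : 1/2 ≤ u) (h1 : u ≤ 1) :
    (∫ s in (0:ℝ)..u, g s) = u - u^2/2 - 1/4 := by
  have split : (∫ s in (0:ℝ)..(1/2:ℝ), g s) + (∫ s in (1/2:ℝ)..u, g s)
      = ∫ s in (0:ℝ)..u, g s :=
    intervalIntegral.integral_add_adjacent_intervals (g_intble 0 (1/2)) (g_intble (1/2) u)
  have h2 : (∫ s in (1/2:ℝ)..u, g s) = (u - u^2/2) - (1/2 - (1/2:ℝ)^2/2) := by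
    apply intervalIntegral.integral_eq_sub_of_hasDerivAt (f := fun x => x - x^2/2)
    · intro x hx
      rw [Set.uIcc_of_le h0] at hx
      rw [g_hi hx.1]
      have : HasDerivAt (fun x : ℝ => x - x^2/2) (1 - 2 * x ^ 1 / 2) x :=
        (hasDerivAt_id x).sub ((hasDerivAt_pow 2 x).div_const 2)
      simpa using this
    · exact g_cont.intervalIntegrable _ _
  rw [← split, F_lo (u := (1/2:ℝ)) (by norm_num) le_rfl, h2]
  ring

lemma G_val {u : ℝ} : (∫ s in (0:ℝ)..u, (g s - 1/12))
    = (∫ s in (0:ℝ)..u, g s) - u/12 := by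
  rw [intervalIntegral.integral_sub (g_intble 0 u) (intervalIntegrable_const)]
  simp [intervalIntegral.integral_const]
  ring

lemma big_cont : Continuous (fun u : ℝ =>
    ((∫ s in (0:ℝ)..u, g s) * g u - ∫ s in (0:ℝ)..u, (g s - 1/12))^2) := by
  have h1 : Continuous (fun u : ℝ => ∫ s in (0:ℝ)..u, g s) :=
    intervalIntegral.continuous_primitive g_intble 0
  have h2 : Continuous (fun u : ℝ => ∫ s in (0:ℝ)..u, (g s - 1/12)) :=
    intervalIntegral.continuous_primitive
      (fun a b => (g_cont.sub continuous_const).intervalIntegrable a b) 0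
  exact ((h1.mul g_cont).sub h2).pow 2

/-- `ψ₆ = ∫₀¹ ((∫₀ᵘ g(s) ds) g(u) - ∫₀ᵘ (g(s) - ψ₂) ds)² du = 143/24192`
for `g(x) = x ∧ (1-x)` and `ψ₂ = 1/12`. -/
theorem psi6_value :
    ∫ u in (0:ℝ)..1,
      ((∫ s in (0:ℝ)..u, g s) * g u - ∫ s in (0:ℝ)..u, (g s - 1/12))^2 = 143/24192 := by
  have split : (∫ u in (0:ℝ)..(1/2:ℝ),
        ((∫ s in (0:ℝ)..u, g s) * g u - ∫ s in (0:ℝ)..u, (g s - 1/12))^2)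
      + (∫ u in (1/2:ℝ)..(1:ℝ),
        ((∫ s in (0:ℝ)..u, g s) * g u - ∫ s in (0:ℝ)..u, (g s - 1/12))^2)
      = ∫ u in (0:ℝ)..(1:ℝ),
        ((∫ s in (0:ℝ)..u, g s) * g u - ∫ s in (0:ℝ)..u, (g s - 1/12))^2 :=
    intervalIntegral.integral_add_adjacent_intervals
      (big_cont.intervalIntegrable _ _) (big_cont.intervalIntegrable _ _)
  rw [← split]
  have e1 : (∫ u in (0:ℝ)..(1/2:ℝ),
        ((∫ s in (0:ℝ)..u, g s) * g u - ∫ s in (0:ℝ)..u, (g s - 1/12))^2)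
      = ∫ u in (0:ℝ)..(1/2:ℝ), (u^3/2 - u^2/2 + u/12)^2 := by
    apply intervalIntegral.integral_congr
    intro u hu
    rw [Set.uIcc_of_le (by norm_num)] at hu
    dsimp only
    rw [G_val, F_lo hu.1 hu.2, g_lo hu.2]
    ring
  have e2 : (∫ u in (1/2:ℝ)..(1:ℝ),
        ((∫ s in (0:ℝ)..u, g s) * g u - ∫ s in (0:ℝ)..u, (g s - 1/12))^2)
      = ∫ u in (1/2:ℝ)..(1:ℝ), (u * (u^2/2 - u + 1/3))^2 := by
    apply intervalIntegral.integral_congr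
    intro u hu
    rw [Set.uIcc_of_le (by norm_num)] at hu
    dsimp only
    rw [G_val, F_hi hu.1 hu.2, g_hi hu.1]
    ring
  rw [e1, e2]
  have P : ∀ x : ℝ, HasDerivAt
      (fun x : ℝ => x^7/28 - x^6/12 + x^5/15 - x^4/48 + x^3/432)
      ((x^3/2 - x^2/2 + x/12)^2) x := by
    intro x
    have h := (((((hasDerivAt_pow 7 x).div_const 28).sub
        ((hasDerivAt_pow 6 x).div_const 12)).add
        ((hasDerivAt_pow 5 x).div_const 15)).sub
        ((hasDerivAt_pow 4 x).div_const 48)).add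
        ((hasDerivAt_pow 3 x).div_const 432)
    refine h.congr_deriv ?_
    push_cast
    ring
  have Q : ∀ x : ℝ, HasDerivAt
      (fun x : ℝ => x^7/28 - x^6/6 + 4*(x^5/15) - x^4/6 + x^3/27)
      ((x * (x^2/2 - x + 1/3))^2) x := by
    intro x
    have h := (((((hasDerivAt_pow 7 x).div_const 28).sub
        ((hasDerivAt_pow 6 x).div_const 6)).add
        (((hasDerivAt_pow 5 x).div_const 15).const_mul (4:ℝ))).sub
        ((hasDerivAt_pow 4 x).div_const 6)).add
        ((hasDerivAt_pow 3 x).div_const 27)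
    refine h.congr_deriv ?_
    push_cast
    ring
  have i1 : (∫ u in (0:ℝ)..(1/2:ℝ), (u^3/2 - u^2/2 + u/12)^2) = 23/483840 := by
    rw [intervalIntegral.integral_eq_sub_of_hasDerivAt (fun x _ => P x)
      (by apply Continuous.intervalIntegrable; continuity)]
    norm_num
  have i2 : (∫ u in (1/2:ℝ)..(1:ℝ), (u * (u^2/2 - u + 1/3))^2) = 2837/483840 := by
    rw [intervalIntegral.integral_eq_sub_of_hasDerivAt (fun x _ => Q x)
      (by apply Continuous.intervalIntegrable; continuity)]
    norm_num
  rw [i1, i2]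
  norm_num
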